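/- arXiv:1010.1229 — 3 statements merged into one kernel-verified Lean document; each statement's English description precedes it below -/
import Mathlib

section
/- Fix an integer d ≥ 1, real numbers 0 < ρ < 1, ζ > 0, a point y = (y₁, y₂) ∈ ℝ^d × ℝ^d, a point x₀ ∈ ℝ^d and a real ε with ε > ‖x₀ − y₁‖ + ζ/2. Let ψ : ℝ^d → ℝ^d be ρ-Lipschitz on the open ball B(x₀, ε). If there exists w₁ ∈ B(x₀, ε) such that ρ·‖w₁ − y₁‖ + ‖ψ(w₁) − y₂‖ < (1 − ρ)ζ/2 (i.e. the graph of ψ meets the unstable core of the rectangle R(y, ζ)), then the closed ball of radius ζ/2 around y₁ is contained in B(x₀, ε), and for every x ∈ ℝ^d with ‖x − y₁‖ ≤ ζ/2 one has ‖ψ(x) − y₂‖ < ζ/2. In particular, the intersection of the graph of ψ with R(y, ζ) contains the graph of a map from the closed ball of radius ζ/2 around y₁ into the open ball of radius ζ/2 around y₂ (the graph is connecting in R(y, ζ)). -/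
/-!
Every point of the closed ball lies within `ζ/2 + ‖w₁ - y₁‖` of `w₁`, so the Lipschitz bound moves
`ψ` by at most `ρ ζ/2 + ρ ‖w₁ - y₁‖` from `ψ w₁`; the core condition leaves exactly the
remaining `(1 - ρ) ζ/2` for `‖ψ w₁ - y₂‖`.
-/

open Metric

theorem dist_lt_of_weighted_dist_lt {α β : Type*} [PseudoMetricSpace α] [PseudoMetricSpace β]
    {f : α → β} {s : Set α} {ρ r : ℝ} (hρ : 0 ≤ ρ)
    (hf : ∀ a ∈ s, ∀ b ∈ s, dist (f a) (f b) ≤ ρ * dist a b) {y₁ w x : α} {y₂ : β}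
    (hw : w ∈ s) (hx : x ∈ s) (hcore : ρ * dist w y₁ + dist (f w) y₂ < (1 - ρ) * r)
    (hxy : dist x y₁ ≤ r) : dist (f x) y₂ < r := by
  have hxw : dist x w ≤ dist x y₁ + dist w y₁ := dist_triangle_right x w y₁
  calc dist (f x) y₂ ≤ dist (f x) (f w) + dist (f w) y₂ := dist_triangle _ _ _
    _ ≤ ρ * (dist x y₁ + dist w y₁) + dist (f w) y₂ := by
      gcongr
      exact (hf x hx w hw).trans (by gcongr)
    _ ≤ ρ * r + (ρ * dist w y₁ + dist (f w) y₂) := by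
      linarith [mul_le_mul_of_nonneg_left hxy hρ]
    _ < ρ * r + (1 - ρ) * r := by gcongr
    _ = r := by ring

theorem connecting_of_meets_unstable_core_general
    (d : ℕ) (ρ ζ : ℝ) (hρ0 : 0 < ρ)
    (y₁ y₂ x₀ : EuclideanSpace ℝ (Fin d)) (ε : ℝ)
    (hε : ‖x₀ - y₁‖ + ζ / 2 < ε)
    (ψ : EuclideanSpace ℝ (Fin d) → EuclideanSpace ℝ (Fin d))
    (hLip : ∀ a ∈ ball x₀ ε, ∀ b ∈ ball x₀ ε, ‖ψ a - ψ b‖ ≤ ρ * ‖a - b‖)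
    (w₁ : EuclideanSpace ℝ (Fin d)) (hw₁ : w₁ ∈ ball x₀ ε)
    (hcore : ρ * ‖w₁ - y₁‖ + ‖ψ w₁ - y₂‖ < (1 - ρ) * ζ / 2) :
    closedBall y₁ (ζ / 2) ⊆ ball x₀ ε ∧
      ∀ x : EuclideanSpace ℝ (Fin d), ‖x - y₁‖ ≤ ζ / 2 → ‖ψ x - y₂‖ < ζ / 2 := by
  have hball : closedBall y₁ (ζ / 2) ⊆ ball x₀ ε :=
    closedBall_subset_ball' (by rwa [dist_comm, dist_eq_norm, add_comm])
  refine ⟨hball, fun x hx => ?_⟩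
  simp only [← dist_eq_norm] at hLip hcore hx ⊢
  rw [mul_div_assoc] at hcore
  exact dist_lt_of_weighted_dist_lt hρ0.le hLip hw₁ (hball (mem_closedBall.2 hx)) hcore hx

/-- If the graph of a `ρ`-Lipschitz map `ψ` (an unstable manifold of size `ε`)
meets the unstable core of the rectangle `R((y₁,y₂), ζ)`, then it is connecting in
that rectangle: the closed ball of radius `ζ/2` around `y₁` lies in the domain ball
`B(x₀, ε)`, and over that closed ball the graph stays in the open ball of radius
`ζ/2` around `y₂`. -/
theorem connecting_of_meets_unstable_core
    (d : ℕ) (hd : 1 ≤ d) (ρ ζ : ℝ) (hρ0 : 0 < ρ) (hρ1 : ρ < 1) (hζ : 0 < ζ)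
    (y₁ y₂ x₀ : EuclideanSpace ℝ (Fin d)) (ε : ℝ)
    (hε : ‖x₀ - y₁‖ + ζ / 2 < ε)
    (ψ : EuclideanSpace ℝ (Fin d) → EuclideanSpace ℝ (Fin d))
    (hLip : ∀ a ∈ ball x₀ ε, ∀ b ∈ ball x₀ ε, ‖ψ a - ψ b‖ ≤ ρ * ‖a - b‖)
    (w₁ : EuclideanSpace ℝ (Fin d)) (hw₁ : w₁ ∈ ball x₀ ε)
    (hcore : ρ * ‖w₁ - y₁‖ + ‖ψ w₁ - y₂‖ < (1 - ρ) * ζ / 2) :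
    closedBall y₁ (ζ / 2) ⊆ ball x₀ ε ∧
      ∀ x : EuclideanSpace ℝ (Fin d), ‖x - y₁‖ ≤ ζ / 2 → ‖ψ x - y₂‖ < ζ / 2 :=
  connecting_of_meets_unstable_core_general d ρ ζ hρ0 y₁ y₂ x₀ ε hε ψ hLip w₁ hw₁ hcore
end

section
/- Let X be a set, T : X → X a bijection, U ⊆ X a subset, and fix integers M ≥ 0 and k ≥ 0. For each integer m ≥ M + 1 let Y_m ⊆ U be a set such that every z ∈ Y_m satisfies: the number of integers i with 1 ≤ i ≤ m − M and T^{−i}(z) ∈ U is exactly k. Then the sets T^{−m}(Y_m), for m ≥ M + 1, are pairwise disjoint: if M + 1 ≤ m₁ < m₂, then T^{−m₁}(Y_{m₁}) ∩ T^{−m₂}(Y_{m₂}) = ∅. -/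
/-!
If `T⁻ᵐ¹ z₁ = T⁻ᵐ² z₂` with `m₁ < m₂`, then `z₁ = T⁻ᵈ z₂` for `d = m₂ - m₁`. Every return of `z₁`
to `U` at a backward time `i ≤ m₁ - M` is a return of `z₂` at time `i + d ≤ m₂ - M`, and `z₁ ∈ U`
is one more return of `z₂`, at time `d`. So `z₂` makes at least `k + 1` returns, not `k`.
-/

open Function

section ReturnTimes

variable {α : Type*} (f : α → α) (U : Set α)

def returnTimes (n : ℕ) (z : α) : Set ℕ := {i | 1 ≤ i ∧ i ≤ n ∧ f^[i] z ∈ U}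

theorem returnTimes_finite (n : ℕ) (z : α) : (returnTimes f U n z).Finite :=
  (Set.finite_Icc 1 n).subset fun _ hi => ⟨hi.1, hi.2.1⟩

variable {f U}

theorem insert_image_add_returnTimes_subset {n d : ℕ} {z : α} (hd : 1 ≤ d) (hz : f^[d] z ∈ U) :
    insert d ((· + d) '' returnTimes f U n (f^[d] z)) ⊆ returnTimes f U (n + d) z := by
  rintro j (rfl | ⟨i, ⟨hi₁, hin, hiU⟩, rfl⟩)
  · exact ⟨hd, by omega, hz⟩
  · dsimp only
    exact ⟨by omega, by omega, by rwa [iterate_add_apply]⟩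

theorem ncard_returnTimes_iterate_lt {n d : ℕ} {z : α} (hd : 1 ≤ d) (hz : f^[d] z ∈ U) :
    (returnTimes f U n (f^[d] z)).ncard < (returnTimes f U (n + d) z).ncard := by
  have hd_notMem : d ∉ (· + d) '' returnTimes f U n (f^[d] z) := by
    rintro ⟨i, ⟨hi₁, -⟩, hid⟩
    simp only at hid
    omega
  calc (returnTimes f U n (f^[d] z)).ncard
      < (insert d ((· + d) '' returnTimes f U n (f^[d] z))).ncard := by
        rw [Set.ncard_insert_of_notMem hd_notMem ((returnTimes_finite f U n _).image _),
          Set.ncard_image_of_injective _ (add_left_injective d)]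
        exact Nat.lt_succ_self _
    _ ≤ (returnTimes f U (n + d) z).ncard :=
        Set.ncard_le_ncard (insert_image_add_returnTimes_subset hd hz) (returnTimes_finite f U _ z)

end ReturnTimes

theorem Function.Injective.eq_iterate_of_iterate_eq_iterate_add {α : Type*} {f : α → α}
    (hf : Injective f) {m d : ℕ} {a b : α} (h : f^[m] a = f^[m + d] b) : a = f^[d] b :=
  hf.iterate m (h.trans (iterate_add_apply f m d b))

/-- Disjointness of the sets `T^{-m}(Y_m)`: if every point of `Y_m` makes exactly `k`
returns to `U` at the backward times `1, …, m − M`, then the sets `T^{-m}(Y_m)`,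
`m ≥ M + 1`, are pairwise disjoint. -/
theorem preimages_pairwise_disjoint
    {X : Type*} (T : X ≃ X) (U : Set X) (M k : ℕ) (Y : ℕ → Set X)
    (hYU : ∀ m, M + 1 ≤ m → Y m ⊆ U)
    (hret : ∀ m, M + 1 ≤ m → ∀ z ∈ Y m,
      {i : ℕ | 1 ≤ i ∧ i ≤ m - M ∧ (⇑T.symm)^[i] z ∈ U}.ncard = k) :
    ∀ m₁ m₂ : ℕ, M + 1 ≤ m₁ → m₁ < m₂ →
      ((⇑T.symm)^[m₁] '' Y m₁) ∩ ((⇑T.symm)^[m₂] '' Y m₂) = ∅ := by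
  intro m₁ m₂ hm₁ hlt
  obtain ⟨d, rfl⟩ := Nat.exists_eq_add_of_lt hlt
  rw [Set.eq_empty_iff_forall_notMem]
  rintro x ⟨⟨z₁, hz₁, rfl⟩, ⟨z₂, hz₂, hx⟩⟩
  have hz : z₁ = (⇑T.symm)^[d + 1] z₂ :=
    T.symm.injective.eq_iterate_of_iterate_eq_iterate_add (by rw [← hx, add_assoc])
  have hk₁ : (returnTimes T.symm U (m₁ - M) ((⇑T.symm)^[d + 1] z₂)).ncard = k :=
    hz ▸ hret m₁ hm₁ z₁ hz₁
  have hk₂ : (returnTimes T.symm U (m₁ - M + (d + 1)) z₂).ncard = k := by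
    rw [show m₁ - M + (d + 1) = m₁ + d + 1 - M by omega]
    exact hret _ (by omega) z₂ hz₂
  have hmore := ncard_returnTimes_iterate_lt (n := m₁ - M) (Nat.le_add_left 1 d)
    (hz ▸ hYU m₁ hm₁ hz₁)
  omega
end

section
/- Let X be a topological space and μ a measure on the Borel σ-algebra of X that is positive on every nonempty open set. Let ι be an index type and (B_i)_{i ∈ ι} a family of sets with μ(B_i ∩ B_j) = 0 whenever i ≠ j. Let C ⊆ X be a preconnected set, let f : X → ι be a function, and suppose that every y ∈ C has an open neighborhood O_y with y ∈ O_y and μ(O_y \ B_{f(y)}) = 0. Then f is constant on C: for all y, z ∈ C one has f(y) = f(z). -/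
open MeasureTheory

theorem IsPreconnected.apply_eq_of_forall_exists_isOpen {X ι : Type*} [TopologicalSpace X]
    {C : Set X} (hC : IsPreconnected C) {f : X → ι}
    (hf : ∀ y ∈ C, ∃ U : Set X, IsOpen U ∧ y ∈ U ∧ ∀ x ∈ U ∩ C, f x = f y)
    {y z : X} (hy : y ∈ C) (hz : z ∈ C) : f y = f z := by
  have := isPreconnected_iff_preconnectedSpace.1 hC
  have hloc : IsLocallyConstant (f ∘ (↑) : C → ι) := by
    refine (IsLocallyConstant.iff_exists_open _).2 fun ⟨y, hy⟩ => ?_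
    obtain ⟨U, hU, hyU, hfU⟩ := hf y hy
    exact ⟨Subtype.val ⁻¹' U, hU.preimage continuous_subtype_val, hyU,
      fun x hx => hfU x ⟨hx, x.2⟩⟩
  exact hloc.apply_eq_of_preconnectedSpace ⟨y, hy⟩ ⟨z, hz⟩

theorem MeasureTheory.measure_inter_null_of_diff_null {X : Type*} [MeasurableSpace X]
    {μ : Measure X} {s t u v : Set X} (hs : μ (s \ u) = 0) (ht : μ (t \ v) = 0)
    (huv : μ (u ∩ v) = 0) : μ (s ∩ t) = 0 :=
  measure_mono_null_ae ((ae_le_set.2 hs).inter (ae_le_set.2 ht)) huv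

theorem constant_on_preconnected_of_local_mod_zero_general
    {X : Type*} [TopologicalSpace X] [MeasurableSpace X]
    (μ : Measure X)
    (hpos : ∀ O : Set X, IsOpen O → O.Nonempty → 0 < μ O)
    {ι : Type*} (B : ι → Set X)
    (hdisj : ∀ i j : ι, i ≠ j → μ (B i ∩ B j) = 0)
    (C : Set X) (hC : IsPreconnected C) (f : X → ι)
    (h : ∀ y ∈ C, ∃ O : Set X, IsOpen O ∧ y ∈ O ∧ μ (O \ B (f y)) = 0) :
    ∀ y ∈ C, ∀ z ∈ C, f y = f z := by
  choose O hO_open hO_mem hO_null using h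
  -- Overlapping neighbourhoods meet in a set of positive measure lying mod 0 in `B (f x) ∩ B (f y)`.
  have hlocal : ∀ y (hy : y ∈ C), ∀ x ∈ O y hy ∩ C, f x = f y := by
    rintro y hy x ⟨hxO, hx⟩
    by_contra hne
    refine (hpos _ ((hO_open x hx).inter (hO_open y hy)) ⟨x, hO_mem x hx, hxO⟩).ne' ?_
    exact measure_inter_null_of_diff_null (hO_null x hx) (hO_null y hy) (hdisj _ _ hne)
  exact fun y hy z hz => hC.apply_eq_of_forall_exists_isOpen
    (fun y hy => ⟨O y hy, hO_open y hy, hO_mem y hy, hlocal y hy⟩) hy hz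

/-- Connectedness argument: if `μ` is positive on nonempty open sets, the family
`(B i)` is almost-everywhere pairwise disjoint, and each point `y` of a preconnected
set `C` has an open neighborhood contained mod `μ`-zero in `B (f y)`, then `f` is
constant on `C`. -/
theorem constant_on_preconnected_of_local_mod_zero
    {X : Type*} [TopologicalSpace X] [MeasurableSpace X] [BorelSpace X]
    (μ : Measure X)
    (hpos : ∀ O : Set X, IsOpen O → O.Nonempty → 0 < μ O)
    {ι : Type*} (B : ι → Set X)
    (hdisj : ∀ i j : ι, i ≠ j → μ (B i ∩ B j) = 0)
    (C : Set X) (hC : IsPreconnected C) (f : X → ι)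
    (h : ∀ y ∈ C, ∃ O : Set X, IsOpen O ∧ y ∈ O ∧ μ (O \ B (f y)) = 0) :
    ∀ y ∈ C, ∀ z ∈ C, f y = f z :=
  constant_on_preconnected_of_local_mod_zero_general μ hpos B hdisj C hC f h
end
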